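/- Let K be an algebraically closed field of characteristic p ≥ 0 and f ∈ K[X] a polynomial of degree d ≥ 2. Fix a periodic point ζ ∈ K of f with least period m, and set λ = (f⁽ᵐ⁾)′(ζ). Then for n ≥ 1 one has aₙ*(ζ) ≥ 1 if and only if one of the following holds: (1) n = m; (2) λ is a root of unity of multiplicative order r in K* and n = m·r; (3) p > 0, λ is a root of unity of multiplicative order r in K*, and n = pᵉ·m·r for some e ≥ 1. -/

import Mathlib

/-!
Write `g = f⁽ᵐ⁾` and `λ = g'(ζ)`. Then `aₖ(ζ) = 0` unless `m ∣ k`, and `a_{mj}(ζ)` is the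
multiplicity of the fixed point `ζ` of `g⁽ʲ⁾`, which is simple when `λʲ ≠ 1`. If `λ` has order
`r`, then `h = f⁽ᵐʳ⁾` has multiplier `1`, and writing `h - X = (X - ζ)ᵇ u` with `u(ζ) ≠ 0` one
finds `h⁽ˢ⁾ - X = (X - ζ)ᵇ V` with `V(ζ) = s·u(ζ)`. So the multiplicity stays `b` when `s` is
invertible in `K` and grows when `p ∣ s`: `a_{mrj}(ζ) = a_{mrpᵛ}(ζ)` for `v = v_p(j)`, strictly
increasing in `v`. Hence `aₖ(ζ) = [m ∣ k] + Σₑ wₑ [mrpᵉ ∣ k]` with all `wₑ ≥ 1`, and Möbius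
inversion turns each indicator `[N ∣ k]` into `[k = N]`: `aₙ*(ζ) = [n = m] + Σₑ wₑ [n = mrpᵉ]`.
-/

open Polynomial

/-- The `n`-th compositional iterate of a polynomial, with `f⁽⁰⁾ = X`. -/
noncomputable def polyIter {K : Type*} [CommSemiring K] (f : K[X]) : ℕ → K[X]
  | 0 => X
  | n + 1 => f.comp (polyIter f n)

/-- `aₙ(ξ)`: the multiplicity of `ξ` as a root of `f⁽ⁿ⁾(X) - X`. -/
noncomputable def aMult {K : Type*} [Field K] (f : K[X]) (n : ℕ) (ξ : K) : ℕ :=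
  rootMultiplicity ξ (polyIter f n - X)

/-- `aₙ*(ξ) = Σ_{k ∣ n} μ(n/k)·a_k(ξ)`. -/
noncomputable def aStar {K : Type*} [Field K] (f : K[X]) (n : ℕ) (ξ : K) : ℤ :=
  ∑ k ∈ n.divisors, (ArithmeticFunction.moebius (n / k)) * (aMult f k ξ : ℤ)

open scoped ArithmeticFunction.Moebius

section Arithmetic

lemma pow_dvd_iff_le_factorization_of_prime_or_zero {p j e : ℕ} (hp : p.Prime ∨ p = 0)
    (hj : j ≠ 0) : p ^ e ∣ j ↔ e ≤ j.factorization p := by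
  rcases hp with hp | rfl
  · exact hp.pow_dvd_iff_le_factorization hj
  · cases e <;> simp [hj]

lemma exists_mem_range_eq_mul_mul_pow_iff {n m r p : ℕ} (hp : p.Prime ∨ p = 0) (hn : n ≠ 0) :
    (∃ e ∈ Finset.range (n + 1), n = m * r * p ^ e) ↔
      (0 < r ∧ n = m * r) ∨ (0 < p ∧ 0 < r ∧ ∃ e, 1 ≤ e ∧ n = p ^ e * m * r) := by
  constructor
  · rintro ⟨e, -, rfl⟩
    have hr : 0 < r := Nat.pos_of_ne_zero (right_ne_zero_of_mul (left_ne_zero_of_mul hn))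
    rcases e with _ | e
    · exact Or.inl ⟨hr, by ring⟩
    · have hp0 : p ≠ 0 := by
        rintro rfl
        simp at hn
      exact Or.inr ⟨Nat.pos_of_ne_zero hp0, hr, e + 1, by omega, by ring⟩
  · rintro (⟨-, rfl⟩ | ⟨hp0, -, e, -, rfl⟩)
    · exact ⟨0, by simp, by ring⟩
    · have hlt : e < p ^ e := Nat.lt_pow_self (hp.resolve_right hp0.ne').one_lt
      have hle : p ^ e ≤ p ^ e * m * r :=
        Nat.le_of_dvd (Nat.pos_of_ne_zero hn) ((dvd_mul_right _ m).mul_right r)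
      exact ⟨e, Finset.mem_range.mpr (by omega), by ring⟩

lemma sum_divisors_moebius_mul_ite_dvd {n : ℕ} (hn : n ≠ 0) (N : ℕ) :
    ∑ k ∈ n.divisors, μ (n / k) * (if N ∣ k then 1 else 0) = if n = N then 1 else 0 := by
  have h := (ArithmeticFunction.sum_eq_iff_sum_mul_moebius_eq (R := ℤ)
    (f := fun k => if k = N then 1 else 0) (g := fun k => if N ∣ k then 1 else 0)).mp
    (fun k hk => by simp [Finset.sum_ite_eq', Nat.mem_divisors, hk.ne']) n (Nat.pos_of_ne_zero hn)
  simp only [Int.cast_id] at h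
  rwa [Nat.sum_divisorsAntidiagonal' (fun a b => μ a * if N ∣ b then 1 else 0)] at h

lemma one_le_ite_add_sum_ite_iff {ι : Type*} {s : Finset ι} {P : Prop} [Decidable P]
    {Q : ι → Prop} [DecidablePred Q] {w : ι → ℤ} (hw : ∀ i ∈ s, Q i → 1 ≤ w i) :
    1 ≤ (if P then 1 else 0) + ∑ i ∈ s, w i * (if Q i then 1 else 0) ↔ P ∨ ∃ i ∈ s, Q i := by
  have hnn : ∀ i ∈ s, 0 ≤ w i * (if Q i then 1 else 0) := fun i hi => by
    split_ifs with h
    · linarith [hw i hi h]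
    · simp
  constructor
  · intro h
    by_contra! hne
    rw [if_neg hne.1, Finset.sum_eq_zero fun i hi => by rw [if_neg (hne.2 i hi), mul_zero]] at h
    omega
  · rintro (hP | ⟨i, hi, hQ⟩)
    · rw [if_pos hP]
      linarith [Finset.sum_nonneg hnn]
    · have h := Finset.single_le_sum hnn hi
      rw [if_pos hQ, mul_one] at h
      have := hw i hi hQ
      split_ifs <;> linarith

end Arithmetic

section Iterate

variable {R : Type*}

section CommSemiring

variable [CommSemiring R] (f : R[X])

@[simp]
lemma polyIter_zero : polyIter f 0 = X := rfl

@[simp]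
lemma polyIter_succ (n : ℕ) : polyIter f (n + 1) = f.comp (polyIter f n) := rfl

lemma polyIter_add (a b : ℕ) : polyIter f (a + b) = (polyIter f a).comp (polyIter f b) := by
  induction a with
  | zero => simp
  | succ a ih => rw [Nat.add_right_comm, polyIter_succ, ih, polyIter_succ, comp_assoc]

lemma polyIter_mul (a b : ℕ) : polyIter f (a * b) = polyIter (polyIter f a) b := by
  induction b with
  | zero => rfl
  | succ b ih => rw [Nat.mul_succ, add_comm, polyIter_add, ih, polyIter_succ]

lemma eval_polyIter (n : ℕ) (x : R) : (polyIter f n).eval x = (fun y => f.eval y)^[n] x := by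
  induction n with
  | zero => simp
  | succ n ih => rw [polyIter_succ, eval_comp, ih, Function.iterate_succ_apply']

lemma eval_polyIter_minimalPeriod (ζ : R) :
    (polyIter f (Function.minimalPeriod (fun x => f.eval x) ζ)).eval ζ = ζ := by
  rw [eval_polyIter]
  exact Function.iterate_minimalPeriod

variable {f} {ζ : R}

lemma eval_polyIter_of_eval_eq (hfix : f.eval ζ = ζ) (s : ℕ) : (polyIter f s).eval ζ = ζ := by
  rw [eval_polyIter]
  exact Function.iterate_fixed hfix s

lemma eval_derivative_polyIter_of_eval_eq (hfix : f.eval ζ = ζ) (s : ℕ) :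
    (polyIter f s).derivative.eval ζ = f.derivative.eval ζ ^ s := by
  induction s with
  | zero => simp
  | succ s ih =>
    rw [polyIter_succ, derivative_comp, eval_mul, eval_comp, eval_polyIter_of_eval_eq hfix, ih,
      pow_succ]

end CommSemiring

lemma natDegree_polyIter [CommSemiring R] [NoZeroDivisors R] [Nontrivial R] (f : R[X])
    (n : ℕ) : (polyIter f n).natDegree = f.natDegree ^ n := by
  induction n with
  | zero => simp
  | succ n ih => rw [polyIter_succ, natDegree_comp, ih, pow_succ']

lemma polyIter_sub_X_ne_zero [CommRing R] [IsDomain R] {f : R[X]} (hf : 2 ≤ f.natDegree)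
    {n : ℕ} (hn : n ≠ 0) : polyIter f n - X ≠ 0 := by
  rw [sub_ne_zero]
  intro h
  have h1 : 1 < f.natDegree ^ n := Nat.one_lt_pow hn (by omega)
  rw [← natDegree_polyIter, h, natDegree_X] at h1
  exact h1.false

end Iterate

section Multiplicity

variable {R : Type*} [CommRing R] {g : R[X]} {ζ : R}

lemma exists_polyIter_sub_X_eq_mul (hfix : g.eval ζ = ζ) (hmul : g.derivative.eval ζ = 1)
    (s : ℕ) : ∃ V : R[X],
      polyIter g s - X = (X - C ζ) ^ rootMultiplicity ζ (g - X) * V ∧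
      V.eval ζ = s * ((g - X) /ₘ (X - C ζ) ^ rootMultiplicity ζ (g - X)).eval ζ := by
  set b := rootMultiplicity ζ (g - X)
  set u := (g - X) /ₘ (X - C ζ) ^ b
  have hgu : (X - C ζ) ^ b * u = g - X := pow_mul_divByMonic_rootMultiplicity_eq (g - X) ζ
  induction s with
  | zero => exact ⟨0, by simp, by simp⟩
  | succ s ih =>
    obtain ⟨V, hV, hVζ⟩ := ih
    set P := polyIter g s
    have hPζ : P.eval ζ = ζ := eval_polyIter_of_eval_eq hfix s
    obtain ⟨w, hw⟩ : X - C ζ ∣ P - C ζ := dvd_iff_isRoot.mpr (by simp [hPζ])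
    -- differentiating `P - ζ = (X - ζ) w` at `ζ` gives `w(ζ) = P'(ζ) = 1`
    have hwζ : w.eval ζ = 1 := by
      have h := congrArg (fun q => q.derivative.eval ζ) hw
      simp only [derivative_sub, derivative_C, sub_zero, derivative_mul, derivative_X,
        eval_add, eval_mul, eval_sub, eval_X, eval_C, sub_self, zero_mul, one_mul, add_zero,
        P, eval_derivative_polyIter_of_eval_eq hfix, hmul, one_pow] at h
      exact h.symm
    refine ⟨V + w ^ b * u.comp P, ?_, ?_⟩
    · have hstep : polyIter g (s + 1) - X = (P - X) + (g - X).comp P := by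
        rw [polyIter_succ, sub_comp, X_comp]
        ring
      rw [hstep, hV, ← hgu, mul_comp, pow_comp, sub_comp, X_comp, C_comp, hw, mul_pow]
      ring
    · rw [eval_add, hVζ, eval_mul, eval_pow, hwζ, eval_comp, hPζ]
      push_cast
      ring

lemma rootMultiplicity_polyIter_sub_X_of_cast_ne_zero [IsDomain R] (hfix : g.eval ζ = ζ)
    (hmul : g.derivative.eval ζ = 1) (hg : g - X ≠ 0) {s : ℕ} (hs : (s : R) ≠ 0) :
    rootMultiplicity ζ (polyIter g s - X) = rootMultiplicity ζ (g - X) := by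
  obtain ⟨V, hV, hVζ⟩ := exists_polyIter_sub_X_eq_mul hfix hmul s
  have hVζ0 : V.eval ζ ≠ 0 := by
    rw [hVζ]
    exact mul_ne_zero hs (eval_divByMonic_pow_rootMultiplicity_ne_zero ζ hg)
  have hV0 : V ≠ 0 := by
    rintro rfl
    simp at hVζ0
  rw [hV, rootMultiplicity_mul (mul_ne_zero (pow_ne_zero _ (X_sub_C_ne_zero ζ)) hV0),
    rootMultiplicity_X_sub_C_pow, rootMultiplicity_eq_zero hVζ0, add_zero]

lemma rootMultiplicity_lt_polyIter_sub_X_of_cast_eq_zero (hfix : g.eval ζ = ζ)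
    (hmul : g.derivative.eval ζ = 1) {s : ℕ} (hgs : polyIter g s - X ≠ 0) (hs : (s : R) = 0) :
    rootMultiplicity ζ (g - X) < rootMultiplicity ζ (polyIter g s - X) := by
  obtain ⟨V, hV, hVζ⟩ := exists_polyIter_sub_X_eq_mul hfix hmul s
  obtain ⟨W, rfl⟩ : X - C ζ ∣ V := dvd_iff_isRoot.mpr (by simp [IsRoot, hVζ, hs])
  rw [Nat.lt_iff_add_one_le, le_rootMultiplicity_iff hgs, hV, pow_succ]
  exact ⟨W, by ring⟩

lemma rootMultiplicity_sub_X_eq_one (hfix : g.eval ζ = ζ) (hmul : g.derivative.eval ζ ≠ 1) :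
    rootMultiplicity ζ (g - X) = 1 := by
  have hroot : (g - X).IsRoot ζ := by simp [hfix]
  have hder : ¬ (g - X).derivative.IsRoot ζ := by simpa [sub_eq_zero] using hmul
  have hg : g - X ≠ 0 := by
    rintro h
    simp [h] at hder
  have h1 := (rootMultiplicity_pos hg).mpr hroot
  have h2 := (one_lt_rootMultiplicity_iff_isRoot hg).not.mpr (fun h => hder h.2)
  omega

lemma two_le_rootMultiplicity_sub_X (hg : g - X ≠ 0) (hfix : g.eval ζ = ζ)
    (hmul : g.derivative.eval ζ = 1) : 2 ≤ rootMultiplicity ζ (g - X) :=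
  (one_lt_rootMultiplicity_iff_isRoot hg).mpr ⟨by simp [hfix], by simp [hmul]⟩

end Multiplicity

noncomputable def multiplier {K : Type*} [Field K] (f : K[X]) (m : ℕ) (ζ : K) : K :=
  (polyIter f m).derivative.eval ζ

/-- For `N = m · orderOf λ` this turns out to be `a*_{Npᵉ}(ζ)`. -/
noncomputable def aMultJump {K : Type*} [Field K] (f : K[X]) (N p : ℕ) (ζ : K) : ℕ → ℤ
  | 0 => aMult f N ζ - 1
  | e + 1 => aMult f (N * p ^ (e + 1)) ζ - aMult f (N * p ^ e) ζ

section AMult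

variable {K : Type*} [Field K] {f : K[X]} {ζ : K}

lemma aMult_eq_zero_of_not_dvd {k : ℕ}
    (hk : ¬ Function.minimalPeriod (fun x => f.eval x) ζ ∣ k) : aMult f k ζ = 0 := by
  refine rootMultiplicity_eq_zero fun h => hk (Function.IsPeriodicPt.minimalPeriod_dvd ?_)
  exact (show (fun x => f.eval x)^[k] ζ = ζ by simpa [eval_polyIter, sub_eq_zero] using h)

section MultiplierOne

variable (hdeg : 2 ≤ f.natDegree) {N : ℕ} (hN : N ≠ 0) (hfix : (polyIter f N).eval ζ = ζ)
  (hmul : (polyIter f N).derivative.eval ζ = 1)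
include hdeg hN hfix hmul

lemma two_le_aMult : 2 ≤ aMult f N ζ :=
  two_le_rootMultiplicity_sub_X (polyIter_sub_X_ne_zero hdeg hN) hfix hmul

lemma aMult_mul_of_cast_ne_zero {s : ℕ} (hs : (s : K) ≠ 0) :
    aMult f (N * s) ζ = aMult f N ζ := by
  rw [aMult, polyIter_mul]
  exact rootMultiplicity_polyIter_sub_X_of_cast_ne_zero hfix hmul
    (polyIter_sub_X_ne_zero hdeg hN) hs

lemma aMult_lt_aMult_mul_of_cast_eq_zero {s : ℕ} (hs0 : s ≠ 0) (hs : (s : K) = 0) :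
    aMult f N ζ < aMult f (N * s) ζ := by
  have hgs := polyIter_sub_X_ne_zero hdeg (mul_ne_zero hN hs0)
  rw [aMult, aMult, polyIter_mul] at *
  exact rootMultiplicity_lt_polyIter_sub_X_of_cast_eq_zero hfix hmul hgs hs

end MultiplierOne

section Tower

variable {m : ℕ} (hfix : (polyIter f m).eval ζ = ζ)
include hfix

lemma eval_polyIter_mul (j : ℕ) : (polyIter f (m * j)).eval ζ = ζ := by
  rw [polyIter_mul]
  exact eval_polyIter_of_eval_eq hfix j

lemma eval_derivative_polyIter_mul (j : ℕ) :
    (polyIter f (m * j)).derivative.eval ζ = multiplier f m ζ ^ j := by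
  rw [polyIter_mul]
  exact eval_derivative_polyIter_of_eval_eq hfix j

lemma aMult_mul_eq_one {j : ℕ} (hj : ¬ orderOf (multiplier f m ζ) ∣ j) :
    aMult f (m * j) ζ = 1 :=
  rootMultiplicity_sub_X_eq_one (eval_polyIter_mul hfix j) fun h =>
    hj (orderOf_dvd_of_pow_eq_one (by rwa [← eval_derivative_polyIter_mul hfix]))

lemma eval_polyIter_mul_orderOf_mul (x : ℕ) :
    (polyIter f (m * orderOf (multiplier f m ζ) * x)).eval ζ = ζ := by
  rw [mul_assoc]
  exact eval_polyIter_mul hfix _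

lemma eval_derivative_polyIter_mul_orderOf_mul (x : ℕ) :
    (polyIter f (m * orderOf (multiplier f m ζ) * x)).derivative.eval ζ = 1 := by
  rw [mul_assoc, eval_derivative_polyIter_mul hfix, pow_mul, pow_orderOf_eq_one, one_pow]

variable (p : ℕ) [CharP K p] (hdeg : 2 ≤ f.natDegree)
include hdeg

lemma aMult_mul_orderOf_mul {j : ℕ} (hj : j ≠ 0) :
    aMult f (m * orderOf (multiplier f m ζ) * j) ζ =
      aMult f (m * orderOf (multiplier f m ζ) * p ^ j.factorization p) ζ := by
  set N := m * orderOf (multiplier f m ζ)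
  rcases eq_or_ne N 0 with hN | hN
  · simp [hN]
  have hcompl : ((ordCompl[p] j : ℕ) : K) ≠ 0 := by
    rw [Ne, CharP.cast_eq_zero_iff K p]
    rcases CharP.char_is_prime_or_zero K p with hp | rfl
    · exact Nat.not_dvd_ordCompl hp hj
    · simpa using hj
  conv_lhs => rw [← Nat.ordProj_mul_ordCompl_eq_self j p, ← mul_assoc]
  exact aMult_mul_of_cast_ne_zero hdeg (mul_ne_zero hN (Nat.ordProj_pos j p).ne')
    (eval_polyIter_mul_orderOf_mul hfix _) (eval_derivative_polyIter_mul_orderOf_mul hfix _)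
    hcompl

lemma one_le_aMultJump {e : ℕ} (he : m * orderOf (multiplier f m ζ) * p ^ e ≠ 0) :
    1 ≤ aMultJump f (m * orderOf (multiplier f m ζ)) p ζ e := by
  have hfixN := eval_polyIter_mul_orderOf_mul hfix
  have hmulN := eval_derivative_polyIter_mul_orderOf_mul hfix
  cases e with
  | zero =>
    have h := two_le_aMult hdeg (by rwa [pow_zero, mul_one] at he) (by simpa using hfixN 1)
      (by simpa using hmulN 1)
    simp only [aMultJump]
    omega
  | succ e =>
    have hp : p ≠ 0 := by
      rintro rfl
      simp at he
    have h := aMult_lt_aMult_mul_of_cast_eq_zero hdeg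
      (left_ne_zero_of_mul (by rwa [pow_succ, ← mul_assoc] at he))
      (hfixN _) (hmulN _) hp (CharP.cast_eq_zero K p)
    simp only [aMultJump]
    rw [pow_succ, ← mul_assoc]
    omega

end Tower

lemma sum_range_aMultJump (f : K[X]) (N p : ℕ) (ζ : K) (v : ℕ) :
    ∑ e ∈ Finset.range (v + 1), aMultJump f N p ζ e = aMult f (N * p ^ v) ζ - 1 := by
  induction v with
  | zero => simp [aMultJump]
  | succ v ih =>
    rw [Finset.sum_range_succ, ih, aMultJump]
    ring

lemma sum_aMultJump_mul_ite_dvd {N p j E : ℕ} (hp : p.Prime ∨ p = 0) (hN : N ≠ 0) (hj : j ≠ 0)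
    (hE : j.factorization p < E) :
    ∑ e ∈ Finset.range E, aMultJump f N p ζ e * (if N * p ^ e ∣ N * j then 1 else 0) =
      aMult f (N * p ^ j.factorization p) ζ - 1 := by
  simp_rw [Nat.mul_dvd_mul_iff_left (Nat.pos_of_ne_zero hN),
    pow_dvd_iff_le_factorization_of_prime_or_zero hp hj, mul_ite, mul_one, mul_zero]
  rw [← Finset.sum_filter, ← sum_range_aMultJump]
  congr 1
  ext e
  simp only [Finset.mem_filter, Finset.mem_range]
  omega

-- If `λ` is not a root of unity then `orderOf λ = 0`, and every term of the sum vanishes.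
lemma aMult_eq_ite_add_sum_aMultJump (p : ℕ) [CharP K p] (hdeg : 2 ≤ f.natDegree) {m : ℕ}
    (hm : Function.minimalPeriod (fun x => f.eval x) ζ = m) {k E : ℕ} (hk : k ≠ 0)
    (hkE : k < E) :
    (aMult f k ζ : ℤ) = (if m ∣ k then 1 else 0) +
      ∑ e ∈ Finset.range E, aMultJump f (m * orderOf (multiplier f m ζ)) p ζ e *
        if m * orderOf (multiplier f m ζ) * p ^ e ∣ k then 1 else 0 := by
  set r := orderOf (multiplier f m ζ)
  have hfix := hm ▸ eval_polyIter_minimalPeriod f ζ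
  have hsum_zero (h : ∀ e, ¬ m * r * p ^ e ∣ k) :
      ∑ e ∈ Finset.range E, aMultJump f (m * r) p ζ e *
        (if m * r * p ^ e ∣ k then 1 else 0) = 0 :=
    Finset.sum_eq_zero fun e _ => by rw [if_neg (h e), mul_zero]
  by_cases hmk : m ∣ k
  swap
  · rw [aMult_eq_zero_of_not_dvd (hm ▸ hmk), if_neg hmk,
      hsum_zero fun e h => hmk ((Dvd.intro (r * p ^ e) (by ring)).trans h)]
    simp
  obtain ⟨j, rfl⟩ := hmk
  have hm0 : 0 < m := Nat.pos_of_ne_zero (left_ne_zero_of_mul hk)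
  by_cases hrj : r ∣ j
  swap
  · rw [aMult_mul_eq_one hfix hrj, if_pos (dvd_mul_right m j),
      hsum_zero fun e h => hrj ((Dvd.intro _ rfl).trans
        (Nat.dvd_of_mul_dvd_mul_left hm0 (by rwa [mul_assoc] at h)))]
    simp
  obtain ⟨j, rfl⟩ := hrj
  rw [← mul_assoc] at hk hkE ⊢
  have hmr : m * r ≠ 0 := left_ne_zero_of_mul hk
  have hj : j ≠ 0 := right_ne_zero_of_mul hk
  have hjE : j < E := (Nat.le_mul_of_pos_left j (Nat.pos_of_ne_zero hmr)).trans_lt hkE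
  rw [aMult_mul_orderOf_mul hfix p hdeg hj, if_pos ((dvd_mul_right m r).mul_right j),
    sum_aMultJump_mul_ite_dvd (CharP.char_is_prime_or_zero K p) hmr hj
      ((Nat.factorization_lt p hj).trans hjE)]
  ring

lemma aStar_eq_ite_add_sum {n m : ℕ} (hn : n ≠ 0)
    {ι : Type*} (s : Finset ι) (N : ι → ℕ) (w : ι → ℤ)
    (ha : ∀ k ∈ n.divisors, (aMult f k ζ : ℤ) =
      (if m ∣ k then 1 else 0) + ∑ i ∈ s, w i * if N i ∣ k then 1 else 0) :
    aStar f n ζ = (if n = m then 1 else 0) + ∑ i ∈ s, w i * if n = N i then 1 else 0 := by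
  rw [aStar, Finset.sum_congr rfl fun k hk => by rw [ha k hk, mul_add, Finset.mul_sum],
    Finset.sum_add_distrib, Finset.sum_comm, sum_divisors_moebius_mul_ite_dvd hn]
  congr 1
  refine Finset.sum_congr rfl fun i _ => ?_
  simp_rw [mul_left_comm _ (w i), ← Finset.mul_sum, sum_divisors_moebius_mul_ite_dvd hn]

end AMult

theorem stmt5_general {K : Type*} [Field K] (p : ℕ) [CharP K p]
    (f : K[X]) (d : ℕ) (hd : 2 ≤ d) (hdeg : f.natDegree = d)
    (ζ : K)
    (m : ℕ) (hm : m = Function.minimalPeriod (fun x => f.eval x) ζ)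
    (lam : K) (hlam : lam = (polyIter f m).derivative.eval ζ)
    (n : ℕ) (hn : 1 ≤ n) :
    1 ≤ aStar f n ζ ↔
      n = m ∨
      (IsOfFinOrder lam ∧ n = m * orderOf lam) ∨
      (0 < p ∧ IsOfFinOrder lam ∧ ∃ e : ℕ, 1 ≤ e ∧ n = p ^ e * m * orderOf lam) := by
  have hn0 : n ≠ 0 := by omega
  have hdeg2 : 2 ≤ f.natDegree := hdeg ▸ hd
  have hfix := hm ▸ eval_polyIter_minimalPeriod f ζ
  replace hlam : lam = multiplier f m ζ := hlam
  subst hlam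
  rw [aStar_eq_ite_add_sum hn0 _ _ _ fun k hk => aMult_eq_ite_add_sum_aMultJump p hdeg2 hm.symm
      (Nat.pos_of_mem_divisors hk).ne' (Nat.lt_succ_of_le (Nat.divisor_le hk)),
    one_le_ite_add_sum_ite_iff fun e _ he => one_le_aMultJump hfix p hdeg2 (he ▸ hn0),
    ← orderOf_pos_iff]
  exact or_congr_right
    (exists_mem_range_eq_mul_mul_pow_iff (CharP.char_is_prime_or_zero K p) hn0)

/-- Morton–Silverman: over an algebraically closed field of characteristic
`p ≥ 0`, for a periodic point `ζ` of least period `m` with multiplier `λ = (f⁽ᵐ⁾)'(ζ)`,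
one has `aₙ*(ζ) ≥ 1` iff `n = m`, or `λ` is a root of unity of order `r` and `n = m·r`,
or `p > 0`, `λ` is a root of unity of order `r`, and `n = pᵉ·m·r` for some `e ≥ 1`. -/
theorem stmt5 {K : Type*} [Field K] [IsAlgClosed K] (p : ℕ) [CharP K p]
    (f : K[X]) (d : ℕ) (hd : 2 ≤ d) (hdeg : f.natDegree = d)
    (ζ : K) (hζ : ζ ∈ Function.periodicPts (fun x => f.eval x))
    (m : ℕ) (hm : m = Function.minimalPeriod (fun x => f.eval x) ζ)
    (lam : K) (hlam : lam = (polyIter f m).derivative.eval ζ)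
    (n : ℕ) (hn : 1 ≤ n) :
    1 ≤ aStar f n ζ ↔
      n = m ∨
      (IsOfFinOrder lam ∧ n = m * orderOf lam) ∨
      (0 < p ∧ IsOfFinOrder lam ∧ ∃ e : ℕ, 1 ≤ e ∧ n = p ^ e * m * orderOf lam) :=
  stmt5_general p f d hd hdeg ζ m hm lam hlam n hn
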